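/- arXiv:2510.22501 — 4 statements merged into one kernel-verified Lean document; each statement's English description precedes it below -/
import Mathlib

section
/- If there exists a vector q ∈ (0,1]ⁿ such that ρ(M(q)) < 1, where M(q) = I − C(q) + (A + Q(I − A))·S0·B, then x(t) → 0 and y(t) → 0 (entrywise) as t → ∞. (Theorem 1, second part, and its Corollary: spectral radius of M(q) below 1 forces both infected and delayable states to vanish.) -/
open Matrix Filter Finset

/-- Spectral radius of a real square matrix: the maximum modulus of its complex
eigenvalues (elements of the spectrum of the matrix viewed over `ℂ`). -/
noncomputable def specRad {n : ℕ} (M : Matrix (Fin n) (Fin n) ℝ) : ℝ :=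
  sSup {r : ℝ | ∃ μ : ℂ, μ ∈ spectrum ℂ (M.map (Complex.ofReal)) ∧ r = ‖μ‖}

/-!
Put `v(t) = x(t) + Q y(t)`. One step of the dynamics gives `v(t+1) ≤ M(q) v(t)` entrywise: on
the `x`-part this uses `c ≤ δ`, on the `y`-part it uses `q c ≤ q δ' + (q - 1) ω`, which is
`c ≤ δ' + (1 - 1/q) ω` multiplied by `q`. As `M(q)` has nonnegative entries, iterating gives
`v(t) ≤ M(q)^t v(0)`, and `M(q)^t → 0` by Gelfand's formula since `ρ(M(q)) < 1`. Finally
`0 ≤ x ≤ v` and `0 ≤ y ≤ Q⁻¹ v`.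
-/

open scoped Topology

theorem tendsto_pow_nhds_zero_of_spectralRadius_lt_one {A : Type*} [NormedRing A]
    [NormedAlgebra ℂ A] [CompleteSpace A] {a : A} (h : spectralRadius ℂ a < 1) :
    Tendsto (a ^ ·) atTop (𝓝 0) := by
  obtain ⟨r, hρr, hr1⟩ := ENNReal.lt_iff_exists_nnreal_btwn.mp h
  have hnorm : ∀ᶠ k : ℕ in atTop, ‖a ^ k‖ ≤ (r : ℝ) ^ k := by
    have hgelfand := spectrum.pow_nnnorm_pow_one_div_tendsto_nhds_spectralRadius a
    filter_upwards [hgelfand.eventually_lt_const hρr, eventually_gt_atTop 0] with k hk hk0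
    rw [one_div, ENNReal.rpow_inv_lt_iff (by positivity), ENNReal.rpow_natCast,
      ← ENNReal.coe_pow, ENNReal.coe_lt_coe] at hk
    exact_mod_cast hk.le
  exact squeeze_zero_norm' hnorm
    (tendsto_pow_atTop_nhds_zero_of_lt_one r.coe_nonneg (mod_cast hr1))

theorem spectralRadius_map_ofReal_le_specRad {n : ℕ} (M : Matrix (Fin n) (Fin n) ℝ) :
    spectralRadius ℂ (M.map Complex.ofReal) ≤ ENNReal.ofReal (specRad M) := by
  have hbdd : BddAbove {r : ℝ | ∃ μ : ℂ, μ ∈ spectrum ℂ (M.map Complex.ofReal) ∧ r = ‖μ‖} :=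
    ((Matrix.finite_spectrum _).image (‖·‖)).bddAbove.mono
      (by rintro _ ⟨μ, hμ, rfl⟩; exact ⟨μ, hμ, rfl⟩)
  refine iSup₂_le fun μ hμ => ?_
  rw [← ENNReal.ofReal_coe_nnreal, coe_nnnorm]
  exact ENNReal.ofReal_le_ofReal (le_csSup hbdd ⟨μ, hμ, rfl⟩)

theorem tendsto_pow_nhds_zero_of_specRad_lt_one {n : ℕ} {M : Matrix (Fin n) (Fin n) ℝ}
    (h : specRad M < 1) : Tendsto (M ^ ·) atTop (𝓝 0) := by
  -- any Banach-algebra norm works here: it induces the product topology on matrices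
  open scoped Matrix.Norms.Operator in
  have hc : Tendsto ((M.map Complex.ofReal) ^ ·) atTop (𝓝 0) :=
    tendsto_pow_nhds_zero_of_spectralRadius_lt_one
      ((spectralRadius_map_ofReal_le_specRad M).trans_lt (ENNReal.ofReal_lt_one.mpr h))
  have hre (t : ℕ) : M ^ t = ((M.map Complex.ofReal) ^ t).map Complex.re := by
    change M ^ t = (Complex.ofRealHom.mapMatrix M ^ t).map Complex.re
    rw [← map_pow]
    ext i j
    simp
  simp only [hre]
  simpa [Function.comp_def] using
    ((continuous_id.matrix_map Complex.continuous_re).tendsto 0).comp hc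

theorem squeeze_zero_pi {ι β : Type*} {l : Filter β} {f g : β → ι → ℝ} (hf : ∀ b, 0 ≤ f b)
    (hfg : ∀ b, f b ≤ g b) (hg : Tendsto g l (𝓝 0)) : Tendsto f l (𝓝 0) :=
  tendsto_pi_nhds.2 fun i =>
    squeeze_zero (fun b => hf b i) (fun b => hfg b i) (tendsto_pi_nhds.1 hg i)

namespace Matrix

variable {ι R : Type*} [Fintype ι]

theorem mulVec_mono_of_nonneg [Semiring R] [PartialOrder R] [IsOrderedRing R]
    {M : Matrix ι ι R} (hM : ∀ i j, 0 ≤ M i j) {v w : ι → R} (hvw : v ≤ w) :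
    M *ᵥ v ≤ M *ᵥ w := fun i =>
  Finset.sum_le_sum fun j _ => mul_le_mul_of_nonneg_left (hvw j) (hM i j)

theorem le_pow_mulVec_of_le_mulVec [DecidableEq ι] [Semiring R] [PartialOrder R]
    [IsOrderedRing R] {M : Matrix ι ι R} (hM : ∀ i j, 0 ≤ M i j) {v : ℕ → ι → R}
    (hv : ∀ t, v (t + 1) ≤ M *ᵥ v t) (t : ℕ) : v t ≤ (M ^ t) *ᵥ v 0 := by
  induction t with
  | zero => rw [pow_zero, one_mulVec]
  | succ t ih =>
    calc v (t + 1) ≤ M *ᵥ v t := hv t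
      _ ≤ M *ᵥ ((M ^ t) *ᵥ v 0) := mulVec_mono_of_nonneg hM ih
      _ = (M ^ (t + 1)) *ᵥ v 0 := by rw [mulVec_mulVec, ← pow_succ']

theorem tendsto_nhds_zero_of_le_mulVec [DecidableEq ι] {M : Matrix ι ι ℝ}
    (hM : ∀ i j, 0 ≤ M i j) (hpow : Tendsto (M ^ ·) atTop (𝓝 0)) {v : ℕ → ι → ℝ}
    (hv0 : ∀ t, 0 ≤ v t) (hv : ∀ t, v (t + 1) ≤ M *ᵥ v t) : Tendsto v atTop (𝓝 0) := by
  refine squeeze_zero_pi hv0 (le_pow_mulVec_of_le_mulVec hM hv) ?_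
  simpa [Function.comp_def] using
    ((continuous_id.matrix_mulVec continuous_const (B := fun _ => v 0)).tendsto 0).comp hpow

theorem diagonal_add_diagonal_mul_mulVec_apply [DecidableEq ι] [Semiring R] (d a : ι → R)
    (B : Matrix ι ι R) (w : ι → R) (i : ι) :
    ((diagonal d + diagonal a * B) *ᵥ w) i = d i * w i + a i * (B *ᵥ w) i := by
  rw [add_mulVec, ← mulVec_mulVec, Pi.add_apply, mulVec_diagonal, mulVec_diagonal]

theorem diagonal_add_diagonal_mul_nonneg [DecidableEq ι] [Semiring R] [PartialOrder R]
    [IsOrderedRing R] {d a : ι → R} {B : Matrix ι ι R} (hd : 0 ≤ d) (ha : 0 ≤ a)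
    (hB : ∀ i j, 0 ≤ B i j) (i j : ι) : 0 ≤ (diagonal d + diagonal a * B) i j := by
  rw [add_apply, diagonal_mul, diagonal_apply]
  split_ifs
  · exact add_nonneg (hd i) (mul_nonneg (ha i) (hB i j))
  · exact add_nonneg le_rfl (mul_nonneg (ha i) (hB i j))

end Matrix

theorem add_mul_one_sub_nonneg {a q : ℝ} (ha : 0 ≤ a) (hq0 : 0 ≤ q) (hq1 : q ≤ 1) :
    0 ≤ a + q * (1 - a) := by
  nlinarith

section SDIR

variable {ι : Type*} [Fintype ι] [DecidableEq ι]

noncomputable def sdirMatrix (α ω δ δ' s q : ι → ℝ) (B : Matrix ι ι ℝ) : Matrix ι ι ℝ :=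
  1 - diagonal (fun i => min (δ i) (δ' i + (1 - 1 / q i) * ω i)) +
    (diagonal α + diagonal q * (1 - diagonal α)) * diagonal s * B

variable {α ω δ δ' s q : ι → ℝ} {B : Matrix ι ι ℝ}

theorem sdirMatrix_eq : sdirMatrix α ω δ δ' s q B =
    diagonal (fun i => 1 - min (δ i) (δ' i + (1 - 1 / q i) * ω i)) +
      diagonal (fun i => (α i + q i * (1 - α i)) * s i) * B := by
  simp only [sdirMatrix, ← diagonal_one, diagonal_sub, diagonal_add, diagonal_mul_diagonal]

theorem sdirMatrix_nonneg (hα : ∀ i, 0 ≤ α i) (hδ : ∀ i, δ i ≤ 1) (hs : ∀ i, 0 ≤ s i)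
    (hB : ∀ i j, 0 ≤ B i j) (hq : ∀ i, 0 < q i ∧ q i ≤ 1) (i j : ι) :
    0 ≤ sdirMatrix α ω δ δ' s q B i j := by
  rw [sdirMatrix_eq]
  refine diagonal_add_diagonal_mul_nonneg (fun k => ?_) (fun k => ?_) hB i j
  · exact sub_nonneg.2 ((min_le_left _ _).trans (hδ k))
  · exact mul_nonneg (add_mul_one_sub_nonneg (hα k) (hq k).1.le (hq k).2) (hs k)

theorem sdir_step_le_sdirMatrix_mulVec (hα : ∀ i, 0 ≤ α i) (hs : ∀ i, 0 ≤ s i)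
    (hB : ∀ i j, 0 ≤ B i j) (hq : ∀ i, 0 < q i ∧ q i ≤ 1) {x y : ι → ℝ} (hx : 0 ≤ x)
    (hy : 0 ≤ y) :
    ((1 - diagonal δ + diagonal α * diagonal s * B) *ᵥ x + diagonal ω *ᵥ y) +
        q * (((1 - diagonal α) * diagonal s * B) *ᵥ x + (1 - diagonal ω - diagonal δ') *ᵥ y) ≤
      sdirMatrix α ω δ δ' s q B *ᵥ (x + q * y) := by
  intro i
  obtain ⟨hq0, hq1⟩ := hq i
  rw [sdirMatrix_eq, diagonal_add_diagonal_mul_mulVec_apply]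
  simp only [Pi.add_apply, Pi.mul_apply, add_mulVec, sub_mulVec, ← mulVec_mulVec, one_mulVec,
    Pi.sub_apply, mulVec_diagonal]
  set c := min (δ i) (δ' i + (1 - 1 / q i) * ω i)
  have hcδ : c ≤ δ i := min_le_left _ _
  have hqc : q i * c ≤ q i * δ' i + (q i - 1) * ω i := by
    have := mul_le_mul_of_nonneg_left (min_le_right _ _ : c ≤ _) hq0.le
    rwa [mul_add, ← mul_assoc, mul_sub, mul_one, mul_one_div_cancel hq0.ne'] at this
  have hBx : (B *ᵥ x) i ≤ (B *ᵥ (x + q * y)) i :=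
    mulVec_mono_of_nonneg hB (le_add_of_nonneg_right (mul_nonneg (fun j => (hq j).1.le) hy)) i
  have he : 0 ≤ (α i + q i * (1 - α i)) * s i :=
    mul_nonneg (add_mul_one_sub_nonneg (hα i) hq0.le hq1) (hs i)
  -- the gap is `(δ - c) x + (q δ' + (q - 1) ω - q c) y + (α + q (1 - α)) s (B (x + q y) - B x)`
  nlinarith [mul_nonneg (sub_nonneg.2 hcδ) (hx i), mul_nonneg (sub_nonneg.2 hqc) (hy i),
    mul_nonneg he (sub_nonneg.2 hBx)]

end SDIR

theorem sdir_convergence_general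
    (n : ℕ) (α ω δ δ' s : Fin n → ℝ)
    (hα : ∀ i, 0 ≤ α i ∧ α i ≤ 1)
    (hδ : ∀ i, 0 ≤ δ i ∧ δ i ≤ 1)
    (hs : ∀ i, 0 ≤ s i ∧ s i ≤ 1)
    (B : Matrix (Fin n) (Fin n) ℝ) (hB : ∀ i j, 0 ≤ B i j)
    (x y : ℕ → Fin n → ℝ)
    (hx : ∀ t i, 0 ≤ x t i) (hy : ∀ t i, 0 ≤ y t i)
    (hdynx : ∀ t, x (t + 1) =
      (1 - Matrix.diagonal δ + Matrix.diagonal α * Matrix.diagonal s * B) *ᵥ x t +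
        Matrix.diagonal ω *ᵥ y t)
    (hdyny : ∀ t, y (t + 1) =
      ((1 - Matrix.diagonal α) * Matrix.diagonal s * B) *ᵥ x t +
        (1 - Matrix.diagonal ω - Matrix.diagonal δ') *ᵥ y t)
    (hq : ∃ q : Fin n → ℝ, (∀ i, 0 < q i ∧ q i ≤ 1) ∧
      specRad
        (1 - Matrix.diagonal (fun i => min (δ i) (δ' i + (1 - 1 / q i) * ω i)) +
          (Matrix.diagonal α + Matrix.diagonal q * (1 - Matrix.diagonal α)) *
            Matrix.diagonal s * B) < 1) :
    Tendsto x atTop (nhds 0) ∧ Tendsto y atTop (nhds 0) := by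
  obtain ⟨q, hq, hρ⟩ := hq
  have hα₀ i := (hα i).1
  have hs₀ i := (hs i).1
  have hx₀ t : 0 ≤ x t := hx t
  have hy₀ t : 0 ≤ y t := hy t
  have hqy t : 0 ≤ q * y t := mul_nonneg (fun i => (hq i).1.le) (hy₀ t)
  have hv : Tendsto (fun t => x t + q * y t) atTop (𝓝 0) :=
    tendsto_nhds_zero_of_le_mulVec (sdirMatrix_nonneg hα₀ (fun i => (hδ i).2) hs₀ hB hq)
      (tendsto_pow_nhds_zero_of_specRad_lt_one hρ) (fun t => add_nonneg (hx₀ t) (hqy t))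
      (fun t => by
        rw [hdynx, hdyny]
        exact sdir_step_le_sdirMatrix_mulVec hα₀ hs₀ hB hq (hx₀ t) (hy₀ t))
  refine ⟨squeeze_zero_pi hx₀ (fun t => le_add_of_nonneg_right (hqy t)) hv,
    squeeze_zero_pi hy₀ (fun t i => ?_) (by simpa using hv.const_mul q⁻¹)⟩
  simp only [Pi.mul_apply, Pi.add_apply, Pi.inv_apply, mul_add,
    inv_mul_cancel_left₀ (hq i).1.ne']
  exact le_add_of_nonneg_left (mul_nonneg (inv_nonneg.2 (hq i).1.le) (hx t i))

/-- Theorem 1 (second part) and its Corollary: if `ρ(M(q)) < 1` for some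
`q ∈ (0,1]ⁿ`, then `x(t) → 0` and `y(t) → 0`. -/
theorem sdir_convergence
    (n : ℕ) (hn : 1 ≤ n) (α ω δ δ' s : Fin n → ℝ)
    (hα : ∀ i, 0 ≤ α i ∧ α i ≤ 1) (hω : ∀ i, 0 ≤ ω i ∧ ω i ≤ 1)
    (hδ : ∀ i, 0 ≤ δ i ∧ δ i ≤ 1) (hδ' : ∀ i, 0 ≤ δ' i ∧ δ' i ≤ 1)
    (hs : ∀ i, 0 ≤ s i ∧ s i ≤ 1) (hωδ' : ∀ i, ω i + δ' i ≤ 1)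
    (B : Matrix (Fin n) (Fin n) ℝ) (hB : ∀ i j, 0 ≤ B i j)
    (x y : ℕ → Fin n → ℝ)
    (hx : ∀ t i, 0 ≤ x t i) (hy : ∀ t i, 0 ≤ y t i)
    (hdynx : ∀ t, x (t + 1) =
      (1 - Matrix.diagonal δ + Matrix.diagonal α * Matrix.diagonal s * B) *ᵥ x t +
        Matrix.diagonal ω *ᵥ y t)
    (hdyny : ∀ t, y (t + 1) =
      ((1 - Matrix.diagonal α) * Matrix.diagonal s * B) *ᵥ x t +
        (1 - Matrix.diagonal ω - Matrix.diagonal δ') *ᵥ y t)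
    (hq : ∃ q : Fin n → ℝ, (∀ i, 0 < q i ∧ q i ≤ 1) ∧
      specRad
        (1 - Matrix.diagonal (fun i => min (δ i) (δ' i + (1 - 1 / q i) * ω i)) +
          (Matrix.diagonal α + Matrix.diagonal q * (1 - Matrix.diagonal α)) *
            Matrix.diagonal s * B) < 1) :
    Tendsto x atTop (nhds 0) ∧ Tendsto y atTop (nhds 0) :=
  sdir_convergence_general n α ω δ δ' s hα hδ hs B hB x y hx hy hdynx hdyny hq
end

section
/- For every q ∈ (0,1]ⁿ and every t ≥ 0, the SDIR trajectories satisfy the entrywise inequality x(t+1) + Q·y(t+1) ≤ M(q)·(x(t) + Q·y(t)), where Q = diag(q) and M(q) = I − C(q) + (A + Q(I − A))·S0·B. (Key one-step comparison inequality from the proof of Theorem 1.) -/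
open Matrix Filter Finset

/-!
Write `z = x(t) + Q·y(t)` and `c = C(q)`. Coordinatewise, the gap between the two sides is
`(δ - c)·x + (q·δ' + (q - 1)·ω - q·c)·y + (α + q(1 - α))·s·(B(z - x))`.
The first two coefficients are nonnegative because `c` is below both entries of the minimum
defining it (the second one after multiplying by `q > 0`), and the last term is nonnegative
because `B ≥ 0` and `z ≥ x`.
-/

namespace Matrix

variable {m n R : Type*} [Fintype n]

lemma mulVec_le_mulVec_of_nonneg [Semiring R] [PartialOrder R] [IsOrderedRing R]
    {M : Matrix m n R} (hM : ∀ i j, 0 ≤ M i j) {v w : n → R} (hvw : v ≤ w) :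
    M *ᵥ v ≤ M *ᵥ w :=
  fun i => dotProduct_le_dotProduct_of_nonneg_left hvw (hM i)

end Matrix

lemma sdir_one_step_comparison_scalar {α δ δ' ω q s x y bx bz : ℝ} (hα : 0 ≤ α) (hq : 0 < q)
    (hq₁ : q ≤ 1) (hs : 0 ≤ s) (hx : 0 ≤ x) (hy : 0 ≤ y) (hb : bx ≤ bz) :
    (1 - δ) * x + α * (s * bx) + ω * y + q * ((1 - α) * (s * bx) + (1 - ω - δ') * y) ≤
      (1 - min δ (δ' + (1 - 1 / q) * ω)) * (x + q * y) + (α + q * (1 - α)) * (s * bz) := by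
  set c := min δ (δ' + (1 - 1 / q) * ω)
  have hx_gap : 0 ≤ (δ - c) * x := mul_nonneg (sub_nonneg.2 (min_le_left _ _)) hx
  have hqc : q * c ≤ q * δ' + (q - 1) * ω :=
    calc q * c ≤ q * (δ' + (1 - 1 / q) * ω) := mul_le_mul_of_nonneg_left (min_le_right _ _) hq.le
      _ = q * δ' + (q - 1) * ω := by field_simp
  have hy_gap : 0 ≤ (q * δ' + (q - 1) * ω - q * c) * y := mul_nonneg (sub_nonneg.2 hqc) hy
  have hcoef : 0 ≤ α + q * (1 - α) := by
    linarith [mul_nonneg hα (sub_nonneg.2 hq₁)]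
  have hb_gap : 0 ≤ (α + q * (1 - α)) * (s * (bz - bx)) :=
    mul_nonneg hcoef (mul_nonneg hs (sub_nonneg.2 hb))
  linear_combination hx_gap + hy_gap + hb_gap

theorem sdir_one_step_comparison_general
    (n : ℕ) (α ω δ δ' s : Fin n → ℝ)
    (hα : ∀ i, 0 ≤ α i ∧ α i ≤ 1)
    (hs : ∀ i, 0 ≤ s i ∧ s i ≤ 1)
    (B : Matrix (Fin n) (Fin n) ℝ) (hB : ∀ i j, 0 ≤ B i j)
    (x y : ℕ → Fin n → ℝ)
    (hx : ∀ t i, 0 ≤ x t i) (hy : ∀ t i, 0 ≤ y t i)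
    (hdynx : ∀ t, x (t + 1) =
      (1 - Matrix.diagonal δ + Matrix.diagonal α * Matrix.diagonal s * B) *ᵥ x t +
        Matrix.diagonal ω *ᵥ y t)
    (hdyny : ∀ t, y (t + 1) =
      ((1 - Matrix.diagonal α) * Matrix.diagonal s * B) *ᵥ x t +
        (1 - Matrix.diagonal ω - Matrix.diagonal δ') *ᵥ y t)
    (q : Fin n → ℝ) (hq : ∀ i, 0 < q i ∧ q i ≤ 1) (t : ℕ) :
    x (t + 1) + Matrix.diagonal q *ᵥ y (t + 1) ≤
      (1 - Matrix.diagonal (fun i => min (δ i) (δ' i + (1 - 1 / q i) * ω i)) +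
        (Matrix.diagonal α + Matrix.diagonal q * (1 - Matrix.diagonal α)) *
          Matrix.diagonal s * B) *ᵥ (x t + Matrix.diagonal q *ᵥ y t) := by
  set z := x t + diagonal q *ᵥ y t
  have hxz : x t ≤ z := le_add_of_nonneg_right fun i => by
    rw [mulVec_diagonal]; exact mul_nonneg (hq i).1.le (hy t i)
  have hBxz := mulVec_le_mulVec_of_nonneg hB hxz
  intro i
  have hzi : z i = x t i + q i * y t i := by simp only [z, Pi.add_apply, mulVec_diagonal]
  rw [hdynx, hdyny]
  simp only [Matrix.add_mul, Matrix.sub_mul, Matrix.one_mul, Matrix.mul_assoc, add_mulVec,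
    sub_mulVec, one_mulVec, ← mulVec_mulVec, mulVec_diagonal, Pi.add_apply, Pi.sub_apply, hzi]
  linear_combination sdir_one_step_comparison_scalar (δ := δ i) (δ' := δ' i) (ω := ω i)
    (hα i).1 (hq i).1 (hq i).2 (hs i).1 (hx t i) (hy t i) (hBxz i)

/-- One-step comparison inequality from the proof of Theorem 1:
`x(t+1) + Q·y(t+1) ≤ M(q)·(x(t) + Q·y(t))` entrywise. -/
theorem sdir_one_step_comparison
    (n : ℕ) (hn : 1 ≤ n) (α ω δ δ' s : Fin n → ℝ)
    (hα : ∀ i, 0 ≤ α i ∧ α i ≤ 1) (hω : ∀ i, 0 ≤ ω i ∧ ω i ≤ 1)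
    (hδ : ∀ i, 0 ≤ δ i ∧ δ i ≤ 1) (hδ' : ∀ i, 0 ≤ δ' i ∧ δ' i ≤ 1)
    (hs : ∀ i, 0 ≤ s i ∧ s i ≤ 1) (hωδ' : ∀ i, ω i + δ' i ≤ 1)
    (B : Matrix (Fin n) (Fin n) ℝ) (hB : ∀ i j, 0 ≤ B i j)
    (x y : ℕ → Fin n → ℝ)
    (hx : ∀ t i, 0 ≤ x t i) (hy : ∀ t i, 0 ≤ y t i)
    (hdynx : ∀ t, x (t + 1) =
      (1 - Matrix.diagonal δ + Matrix.diagonal α * Matrix.diagonal s * B) *ᵥ x t +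
        Matrix.diagonal ω *ᵥ y t)
    (hdyny : ∀ t, y (t + 1) =
      ((1 - Matrix.diagonal α) * Matrix.diagonal s * B) *ᵥ x t +
        (1 - Matrix.diagonal ω - Matrix.diagonal δ') *ᵥ y t)
    (q : Fin n → ℝ) (hq : ∀ i, 0 < q i ∧ q i ≤ 1) (t : ℕ) :
    x (t + 1) + Matrix.diagonal q *ᵥ y (t + 1) ≤
      (1 - Matrix.diagonal (fun i => min (δ i) (δ' i + (1 - 1 / q i) * ω i)) +
        (Matrix.diagonal α + Matrix.diagonal q * (1 - Matrix.diagonal α)) *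
          Matrix.diagonal s * B) *ᵥ (x t + Matrix.diagonal q *ᵥ y t) :=
  sdir_one_step_comparison_general n α ω δ δ' s hα hs B hB x y hx hy hdynx hdyny q hq t
end

section
/- Assume α_i ∈ (0,1] and ω_i + δ'_i > 0 for every i, fix nonnegative initial vectors x(0), y(0) ∈ ℝⁿ, and let Q ⊆ {1,…,n}×{1,…,n} be a candidate edge set such that ρ(N_{−P}) < 1 for every P ⊆ Q. Then the set function P ↦ σ^L(P) = 1ᵀ·A^{−1}·(D·(I − N_{−P})^{−1} − I)·(x(0) + W·(W + D')^{−1}·y(0)) is supermodular on subsets of Q: for all P ⊆ P' ⊆ Q and every edge e ∈ Q \ P', one has σ^L(P ∪ {e}) − σ^L(P) ≤ σ^L(P' ∪ {e}) − σ^L(P'). (Second part of Lemma 2.) -/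
/-!
Write `R(P) = (I − N₋ₚ)⁻¹`. Gelfand's formula turns `ρ(N₋ₚ) < 1` into convergence of the
Neumann series `R(P) = ∑ₖ N₋ₚᵏ`; as `N₋ₚ` is entrywise nonnegative and antitone in `P`, so is
`R(P)`. Adding an edge `e ∉ P` subtracts from `N₋ₚ` a nonnegative matrix `E` that does not depend
on `P`, and the resolvent identity `R(P ∪ {e}) − R(P) = −R(P ∪ {e}) E R(P)` shows that this
increment grows with `P`. The increment of `σᴸ` is the increment of `R` paired with the
nonnegative vectors `1ᵀA⁻¹D` and `x(0) + W(W + D')⁻¹y(0)`.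
-/

open Matrix Filter Finset

/-- The matrix `B` with the entries indexed by the edge set `P` deleted (set to `0`). -/
def Bdel {n : ℕ} (B : Matrix (Fin n) (Fin n) ℝ) (P : Finset (Fin n × Fin n)) :
    Matrix (Fin n) (Fin n) ℝ :=
  Matrix.of fun i j => if (i, j) ∈ P then 0 else B i j

/-- The lower-bound set function
`σᴸ(P) = 1ᵀ·A⁻¹·(D·(I − N₋ₚ)⁻¹ − I)·(x0 + W·(W + D')⁻¹·y0)`. -/
noncomputable def sigmaL {n : ℕ} (α ω δ δ' s x0 y0 : Fin n → ℝ)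
    (B : Matrix (Fin n) (Fin n) ℝ) (P : Finset (Fin n × Fin n)) : ℝ :=
  (fun _ => (1 : ℝ)) ⬝ᵥ
    ((Matrix.diagonal α)⁻¹ *
      (Matrix.diagonal δ *
        (1 - (1 - Matrix.diagonal δ +
          Matrix.diagonal α * Matrix.diagonal s * Bdel B P))⁻¹ - 1)) *ᵥ
      (x0 + (Matrix.diagonal ω * (Matrix.diagonal ω + Matrix.diagonal δ')⁻¹) *ᵥ y0)

namespace Matrix

variable {ι : Type*} [Fintype ι]

section Nonneg

variable {α m o : Type*} [Zero α] [Preorder α]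

theorem diagonal_apply_nonneg [DecidableEq m] {v : m → α} (hv : ∀ i, 0 ≤ v i) (i j : m) :
    0 ≤ diagonal v i j := by
  rw [diagonal_apply]
  split_ifs
  exacts [hv i, le_rfl]

theorem single_apply_nonneg [DecidableEq m] [DecidableEq o] {a : α} (ha : 0 ≤ a) (i : m)
    (j : o) (i' : m) (j' : o) : 0 ≤ single i j a i' j' := by
  rw [single, of_apply]
  split_ifs
  exacts [ha, le_rfl]

end Nonneg

section OrderedSemiring

variable {α m o : Type*} [Semiring α] [PartialOrder α] [IsOrderedRing α]

theorem mulVec_apply_nonneg {A : Matrix m ι α} {v : ι → α} (hA : ∀ i j, 0 ≤ A i j)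
    (hv : ∀ j, 0 ≤ v j) (i : m) : 0 ≤ (A *ᵥ v) i :=
  Finset.sum_nonneg fun j _ => mul_nonneg (hA i j) (hv j)

theorem mul_apply_nonneg {A : Matrix m ι α} {B : Matrix ι o α} (hA : ∀ i j, 0 ≤ A i j)
    (hB : ∀ i j, 0 ≤ B i j) (i : m) (j : o) : 0 ≤ (A * B) i j :=
  Finset.sum_nonneg fun k _ => mul_nonneg (hA i k) (hB k j)

theorem mul_apply_le_mul_apply_of_nonneg_left {C : Matrix m ι α} {X Y : Matrix ι o α}
    (hC : ∀ i j, 0 ≤ C i j) (hXY : ∀ i j, X i j ≤ Y i j) (i : m) (j : o) :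
    (C * X) i j ≤ (C * Y) i j :=
  Finset.sum_le_sum fun k _ => mul_le_mul_of_nonneg_left (hXY k j) (hC i k)

theorem mul_apply_le_mul_apply {A A' : Matrix m ι α} {B B' : Matrix ι o α}
    (hA : ∀ i j, 0 ≤ A i j) (hB : ∀ i j, 0 ≤ B i j) (hAA' : ∀ i j, A i j ≤ A' i j)
    (hBB' : ∀ i j, B i j ≤ B' i j) (i : m) (j : o) : (A * B) i j ≤ (A' * B') i j :=
  Finset.sum_le_sum fun k _ =>
    mul_le_mul (hAA' i k) (hBB' k j) (hB k j) ((hA i k).trans (hAA' i k))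

theorem pow_apply_le_pow_apply [DecidableEq ι] {A B : Matrix ι ι α} (hA : ∀ i j, 0 ≤ A i j)
    (hAB : ∀ i j, A i j ≤ B i j) (k : ℕ) (i j : ι) : (A ^ k) i j ≤ (B ^ k) i j := by
  induction k generalizing i j with
  | zero => exact le_rfl
  | succ k ih =>
    rw [pow_succ, pow_succ]
    exact mul_apply_le_mul_apply (pow_apply_nonneg hA k) hA ih hAB i j

theorem dotProduct_mulVec_le_dotProduct_mulVec [Fintype m] {X Y : Matrix m ι α} {u : m → α}
    {v : ι → α} (hu : ∀ i, 0 ≤ u i) (hv : ∀ j, 0 ≤ v j) (hXY : ∀ i j, X i j ≤ Y i j) :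
    u ⬝ᵥ X *ᵥ v ≤ u ⬝ᵥ Y *ᵥ v :=
  Finset.sum_le_sum fun i _ => mul_le_mul_of_nonneg_left
    (Finset.sum_le_sum fun j _ => mul_le_mul_of_nonneg_right (hXY i j) (hv j)) (hu i)

end OrderedSemiring

variable [DecidableEq ι]

-- Mathlib's inverse of a singular matrix is `0`, so no invertibility assumption is needed.
theorem inv_diagonal_apply_nonneg {v : ι → ℝ} (hv : ∀ i, 0 ≤ v i) (i j : ι) :
    0 ≤ (diagonal v)⁻¹ i j := by
  rw [inv_diagonal]
  refine diagonal_apply_nonneg (fun k => ?_) i j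
  by_cases h : IsUnit v
  · have hk : Ring.inverse v k * v k = 1 := congrFun (Ring.inverse_mul_cancel v h) k
    rw [eq_inv_of_mul_eq_one_left hk]
    exact inv_nonneg.2 (hv k)
  · simp [Ring.inverse_non_unit _ h]

section Resolvent

variable {M N E : Matrix ι ι ℝ}

theorem inv_one_sub_eq_tsum_pow (h : Summable (M ^ ·)) : (1 - M)⁻¹ = ∑' k, M ^ k :=
  inv_eq_right_inv h.one_sub_mul_tsum_pow

theorem isUnit_one_sub_of_summable_pow (h : Summable (M ^ ·)) : IsUnit (1 - M) :=
  ⟨⟨1 - M, ∑' k, M ^ k, h.one_sub_mul_tsum_pow, h.tsum_pow_mul_one_sub⟩, rfl⟩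

theorem hasSum_pow_apply (h : Summable (M ^ ·)) (i j : ι) :
    HasSum (fun k => (M ^ k) i j) ((1 - M)⁻¹ i j) := by
  rw [inv_one_sub_eq_tsum_pow h]
  exact Pi.hasSum.mp (Pi.hasSum.mp h.hasSum i) j

theorem summable_pow_of_le (hM : ∀ i j, 0 ≤ M i j) (hMN : ∀ i j, M i j ≤ N i j)
    (hN : Summable (N ^ ·)) : Summable (M ^ ·) :=
  Pi.summable.mpr fun i => Pi.summable.mpr fun j =>
    (Pi.summable.mp (Pi.summable.mp hN i) j).of_nonneg_of_le (fun k => pow_apply_nonneg hM k i j)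
      (fun k => pow_apply_le_pow_apply hM hMN k i j)

theorem inv_one_sub_apply_nonneg (hM : ∀ i j, 0 ≤ M i j) (h : Summable (M ^ ·)) (i j : ι) :
    0 ≤ (1 - M)⁻¹ i j :=
  (hasSum_pow_apply h i j).nonneg fun k => pow_apply_nonneg hM k i j

theorem inv_one_sub_apply_le (hM : ∀ i j, 0 ≤ M i j) (hMN : ∀ i j, M i j ≤ N i j)
    (hN : Summable (N ^ ·)) (i j : ι) : (1 - M)⁻¹ i j ≤ (1 - N)⁻¹ i j :=
  hasSum_le (fun k => pow_apply_le_pow_apply hM hMN k i j)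
    (hasSum_pow_apply (summable_pow_of_le hM hMN hN) i j) (hasSum_pow_apply hN i j)

theorem inv_one_sub_sub_sub_inv_one_sub (hM : Summable (M ^ ·)) (hME : Summable ((M - E) ^ ·)) :
    (1 - (M - E))⁻¹ - (1 - M)⁻¹ = -((1 - (M - E))⁻¹ * E * (1 - M)⁻¹) := by
  rw [inv_sub_inv (iff_of_true (isUnit_one_sub_of_summable_pow hME)
    (isUnit_one_sub_of_summable_pow hM))]
  noncomm_ring

/-- The resolvent `M ↦ (1 - M)⁻¹` has increasing differences on nonnegative matrices whose
Neumann series converges. -/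
theorem inv_one_sub_sub_sub_inv_one_sub_apply_le {M' : Matrix ι ι ℝ}
    (hE : ∀ i j, 0 ≤ E i j) (hM'E : ∀ i j, 0 ≤ (M' - E) i j) (hM'M : ∀ i j, M' i j ≤ M i j)
    (hM : Summable (M ^ ·)) (i j : ι) :
    ((1 - (M - E))⁻¹ - (1 - M)⁻¹) i j ≤ ((1 - (M' - E))⁻¹ - (1 - M')⁻¹) i j := by
  have hM' : ∀ i j, 0 ≤ M' i j := fun i j => by
    simpa using add_nonneg (hM'E i j) (hE i j)
  have hME_le : ∀ i j, (M - E) i j ≤ M i j := fun i j => by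
    simpa using hE i j
  have hM'E_le : ∀ i j, (M' - E) i j ≤ (M - E) i j := fun i j => by
    simpa using hM'M i j
  have hME : ∀ i j, 0 ≤ (M - E) i j := fun i j => (hM'E i j).trans (hM'E_le i j)
  have hsME := summable_pow_of_le hME hME_le hM
  have hsM' := summable_pow_of_le hM' hM'M hM
  have hsM'E := summable_pow_of_le hM'E hM'E_le hsME
  rw [inv_one_sub_sub_sub_inv_one_sub hM hsME, inv_one_sub_sub_sub_inv_one_sub hsM' hsM'E,
    neg_apply, neg_apply, neg_le_neg_iff]
  refine mul_apply_le_mul_apply (mul_apply_nonneg (inv_one_sub_apply_nonneg hM'E hsM'E) hE)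
    (inv_one_sub_apply_nonneg hM' hsM')
    (mul_apply_le_mul_apply (inv_one_sub_apply_nonneg hM'E hsM'E) hE
      (inv_one_sub_apply_le hM'E hM'E_le hsME) fun _ _ => le_rfl)
    (inv_one_sub_apply_le hM' hM'M hM) i j

end Resolvent

theorem map_ofReal_pow (M : Matrix ι ι ℝ) (k : ℕ) :
    M.map Complex.ofReal ^ k = (M ^ k).map Complex.ofReal :=
  (map_pow Complex.ofRealHom.mapMatrix M k).symm

end Matrix

theorem summable_norm_pow_of_spectralRadius_lt_one {A : Type*} [NormedRing A]
    [NormedAlgebra ℂ A] [CompleteSpace A] {a : A} (h : spectralRadius ℂ a < 1) :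
    Summable fun k => ‖a ^ k‖ := by
  obtain ⟨r, hρr, hr1⟩ := ENNReal.lt_iff_exists_nnreal_btwn.mp h
  refine Summable.of_norm_bounded_eventually_nat
    (summable_geometric_of_lt_one r.2 (by exact_mod_cast hr1)) ?_
  have hgelfand := spectrum.pow_nnnorm_pow_one_div_tendsto_nhds_spectralRadius a
  filter_upwards [hgelfand.eventually_lt_const hρr, eventually_gt_atTop 0] with k hk hk0
  rw [one_div, ENNReal.rpow_inv_lt_iff (by positivity), ENNReal.rpow_natCast,
    ← ENNReal.coe_pow, ENNReal.coe_lt_coe] at hk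
  rw [norm_norm]
  exact_mod_cast hk.le

section SpectralRadius

attribute [local instance] Matrix.linftyOpNormedRing Matrix.linftyOpNormedAlgebra

variable {n : ℕ} {M : Matrix (Fin n) (Fin n) ℝ}

theorem spectralRadius_map_ofReal_lt_one (h : specRad M < 1) :
    spectralRadius ℂ (M.map Complex.ofReal) < 1 := by
  have hbdd : BddAbove {r : ℝ | ∃ μ ∈ spectrum ℂ (M.map Complex.ofReal), r = ‖μ‖} :=
    ⟨_, by rintro _ ⟨μ, hμ, rfl⟩; exact spectrum.norm_le_norm_mul_of_mem hμ⟩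
  refine lt_of_le_of_lt (iSup₂_le fun μ hμ => ?_) (ENNReal.ofReal_lt_one.mpr h)
  rw [← ENNReal.ofReal_coe_nnreal, coe_nnnorm]
  exact ENNReal.ofReal_le_ofReal (le_csSup hbdd ⟨μ, hμ, rfl⟩)

-- Gelfand's formula over `ℂ`, transported back along the isometry `M ↦ M.map ofReal`.
theorem summable_pow_of_specRad_lt_one (h : specRad M < 1) : Summable (M ^ ·) := by
  refine Summable.of_norm ?_
  convert summable_norm_pow_of_spectralRadius_lt_one (spectralRadius_map_ofReal_lt_one h)
    using 2 with k
  simp [Matrix.map_ofReal_pow, Matrix.linfty_opNorm_def]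

end SpectralRadius

section EdgeDeletion

variable {n : ℕ} {α δ s : Fin n → ℝ} {B : Matrix (Fin n) (Fin n) ℝ}
  {P P' : Finset (Fin n × Fin n)} {e : Fin n × Fin n}

/-- The matrix `N₋ₚ = I − D + A·S0·B₋ₚ`. -/
def Ndel (α δ s : Fin n → ℝ) (B : Matrix (Fin n) (Fin n) ℝ) (P : Finset (Fin n × Fin n)) :
    Matrix (Fin n) (Fin n) ℝ :=
  1 - diagonal δ + diagonal α * diagonal s * Bdel B P

theorem Bdel_apply_nonneg (hB : ∀ i j, 0 ≤ B i j) (P : Finset (Fin n × Fin n)) (i j : Fin n) :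
    0 ≤ Bdel B P i j := by
  rw [Bdel, of_apply]
  split_ifs
  exacts [le_rfl, hB i j]

theorem Bdel_apply_anti (hB : ∀ i j, 0 ≤ B i j) (hPP' : P ⊆ P') (i j : Fin n) :
    Bdel B P' i j ≤ Bdel B P i j := by
  simp only [Bdel, of_apply]
  by_cases h : (i, j) ∈ P
  · simp [h, hPP' h]
  · split_ifs
    exacts [hB i j, le_rfl]

theorem Bdel_insert (he : e ∉ P) :
    Bdel B (insert e P) = Bdel B P - single e.1 e.2 (B e.1 e.2) := by
  ext i j
  obtain ⟨a, b⟩ := e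
  by_cases hij : (i, j) = (a, b)
  · obtain ⟨rfl, rfl⟩ := Prod.mk.inj hij
    simp [Bdel, he]
  · have hij' : ¬(i = a ∧ j = b) := fun h => hij (by rw [h.1, h.2])
    have hij'' : ¬(a = i ∧ b = j) := fun h => hij (by rw [h.1, h.2])
    simp [Bdel, single, hij', hij'']

theorem Ndel_insert (he : e ∉ P) :
    Ndel α δ s B (insert e P) =
      Ndel α δ s B P - diagonal α * diagonal s * single e.1 e.2 (B e.1 e.2) := by
  rw [Ndel, Ndel, Bdel_insert he, mul_sub]
  abel

theorem Ndel_apply_nonneg (hα : ∀ i, 0 ≤ α i) (hs : ∀ i, 0 ≤ s i) (hB : ∀ i j, 0 ≤ B i j)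
    (hδ : ∀ i, δ i ≤ 1) (P : Finset (Fin n × Fin n)) (i j : Fin n) :
    0 ≤ Ndel α δ s B P i j := by
  rw [Ndel, Matrix.add_apply, ← diagonal_one, diagonal_sub]
  exact add_nonneg (diagonal_apply_nonneg (fun k => sub_nonneg.2 (hδ k)) i j)
    (mul_apply_nonneg (mul_apply_nonneg (diagonal_apply_nonneg hα) (diagonal_apply_nonneg hs))
      (Bdel_apply_nonneg hB P) i j)

theorem Ndel_apply_anti (hα : ∀ i, 0 ≤ α i) (hs : ∀ i, 0 ≤ s i) (hB : ∀ i j, 0 ≤ B i j)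
    (hPP' : P ⊆ P') (i j : Fin n) :
    Ndel α δ s B P' i j ≤ Ndel α δ s B P i j := by
  simp only [Ndel, Matrix.add_apply]
  exact add_le_add le_rfl (mul_apply_le_mul_apply_of_nonneg_left
    (mul_apply_nonneg (diagonal_apply_nonneg hα) (diagonal_apply_nonneg hs))
    (Bdel_apply_anti hB hPP') i j)

end EdgeDeletion

theorem sigmaL_sub_sigmaL {n : ℕ} (α ω δ δ' s x0 y0 : Fin n → ℝ)
    (B : Matrix (Fin n) (Fin n) ℝ) (P Q : Finset (Fin n × Fin n)) :
    sigmaL α ω δ δ' s x0 y0 B P - sigmaL α ω δ δ' s x0 y0 B Q =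
      (fun _ => (1 : ℝ)) ⬝ᵥ ((diagonal α)⁻¹ * diagonal δ *
        ((1 - Ndel α δ s B P)⁻¹ - (1 - Ndel α δ s B Q)⁻¹)) *ᵥ
      (x0 + (diagonal ω * (diagonal ω + diagonal δ')⁻¹) *ᵥ y0) := by
  rw [sigmaL, sigmaL, ← dotProduct_sub, ← sub_mulVec]
  congr 2
  simp only [Ndel]
  noncomm_ring

theorem sigmaL_supermodular_general
    (n : ℕ) (α ω δ δ' s : Fin n → ℝ)
    (hα : ∀ i, 0 < α i ∧ α i ≤ 1) (hω : ∀ i, 0 ≤ ω i ∧ ω i ≤ 1)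
    (hδ : ∀ i, 0 ≤ δ i ∧ δ i ≤ 1) (hδ' : ∀ i, 0 ≤ δ' i ∧ δ' i ≤ 1)
    (hs : ∀ i, 0 ≤ s i ∧ s i ≤ 1)
    (B : Matrix (Fin n) (Fin n) ℝ) (hB : ∀ i j, 0 ≤ B i j)
    (x0 y0 : Fin n → ℝ) (hx0 : ∀ i, 0 ≤ x0 i) (hy0 : ∀ i, 0 ≤ y0 i)
    (Qc : Finset (Fin n × Fin n))
    (hρ : ∀ P ⊆ Qc, specRad
      (1 - Matrix.diagonal δ + Matrix.diagonal α * Matrix.diagonal s * Bdel B P) < 1) :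
    ∀ P P' : Finset (Fin n × Fin n), ∀ e : Fin n × Fin n,
      P ⊆ P' → P' ⊆ Qc → e ∈ Qc → e ∉ P' →
      sigmaL α ω δ δ' s x0 y0 B (insert e P) - sigmaL α ω δ δ' s x0 y0 B P ≤
        sigmaL α ω δ δ' s x0 y0 B (insert e P') - sigmaL α ω δ δ' s x0 y0 B P' := by
  intro P P' e hPP' hP'Q _ heP'
  have hα0 : ∀ i, 0 ≤ α i := fun i => (hα i).1.le
  have hs0 : ∀ i, 0 ≤ s i := fun i => (hs i).1
  have hE : ∀ i j, 0 ≤ (diagonal α * diagonal s * single e.1 e.2 (B e.1 e.2)) i j :=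
    mul_apply_nonneg (mul_apply_nonneg (diagonal_apply_nonneg hα0) (diagonal_apply_nonneg hs0))
      (single_apply_nonneg (hB e.1 e.2) e.1 e.2)
  have hC : ∀ i j, 0 ≤ ((diagonal α)⁻¹ * diagonal δ) i j :=
    mul_apply_nonneg (inv_diagonal_apply_nonneg hα0) (diagonal_apply_nonneg fun i => (hδ i).1)
  have hW : ∀ i j, 0 ≤ (diagonal ω * (diagonal ω + diagonal δ')⁻¹) i j := by
    rw [diagonal_add]
    exact mul_apply_nonneg (diagonal_apply_nonneg fun k => (hω k).1)
      (inv_diagonal_apply_nonneg fun k => add_nonneg (hω k).1 (hδ' k).1)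
  have hv : ∀ i, 0 ≤ (x0 + (diagonal ω * (diagonal ω + diagonal δ')⁻¹) *ᵥ y0) i :=
    fun i => add_nonneg (hx0 i) (mulVec_apply_nonneg hW hy0 i)
  have hP'e : ∀ i j,
      0 ≤ (Ndel α δ s B P' - diagonal α * diagonal s * single e.1 e.2 (B e.1 e.2)) i j := by
    rw [← Ndel_insert heP']
    exact Ndel_apply_nonneg hα0 hs0 hB (fun i => (hδ i).2) _
  rw [sigmaL_sub_sigmaL, sigmaL_sub_sigmaL, Ndel_insert fun h => heP' (hPP' h), Ndel_insert heP']
  exact dotProduct_mulVec_le_dotProduct_mulVec (fun _ => zero_le_one) hv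
    (mul_apply_le_mul_apply_of_nonneg_left hC
      (inv_one_sub_sub_sub_inv_one_sub_apply_le hE hP'e (Ndel_apply_anti hα0 hs0 hB hPP')
        (summable_pow_of_specRad_lt_one (hρ P (hPP'.trans hP'Q)))))

/-- Lemma 2 (second part): `σᴸ` is supermodular on subsets of the candidate set. -/
theorem sigmaL_supermodular
    (n : ℕ) (hn : 1 ≤ n) (α ω δ δ' s : Fin n → ℝ)
    (hα : ∀ i, 0 < α i ∧ α i ≤ 1) (hω : ∀ i, 0 ≤ ω i ∧ ω i ≤ 1)
    (hδ : ∀ i, 0 ≤ δ i ∧ δ i ≤ 1) (hδ' : ∀ i, 0 ≤ δ' i ∧ δ' i ≤ 1)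
    (hs : ∀ i, 0 ≤ s i ∧ s i ≤ 1) (hωδ' : ∀ i, ω i + δ' i ≤ 1)
    (hωδ'pos : ∀ i, 0 < ω i + δ' i)
    (B : Matrix (Fin n) (Fin n) ℝ) (hB : ∀ i j, 0 ≤ B i j)
    (x0 y0 : Fin n → ℝ) (hx0 : ∀ i, 0 ≤ x0 i) (hy0 : ∀ i, 0 ≤ y0 i)
    (Qc : Finset (Fin n × Fin n))
    (hρ : ∀ P ⊆ Qc, specRad
      (1 - Matrix.diagonal δ + Matrix.diagonal α * Matrix.diagonal s * Bdel B P) < 1) :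
    ∀ P P' : Finset (Fin n × Fin n), ∀ e : Fin n × Fin n,
      P ⊆ P' → P' ⊆ Qc → e ∈ Qc → e ∉ P' →
      sigmaL α ω δ δ' s x0 y0 B (insert e P) - sigmaL α ω δ δ' s x0 y0 B P ≤
        sigmaL α ω δ δ' s x0 y0 B (insert e P') - sigmaL α ω δ δ' s x0 y0 B P' :=
  sigmaL_supermodular_general n α ω δ δ' s hα hω hδ hδ' hs B hB x0 y0 hx0 hy0 Qc hρ
end

section
/- Let A and B be n×n real matrices with nonnegative entries, and for l ≥ 0 set C_l = Σ_{j=0}^{l} Bʲ. Then for all integers t > t₀ ≥ 0 the following entrywise inequalities hold: Σ_{l=0}^{t₀} Aˡ·C_{t−t₀} + A^{t₀+1}·Σ_{l=0}^{t−t₀−1} Aˡ ≤ Σ_{s=0}^{t} Σ_{l=0}^{s} Aˡ·B^{s−l} ≤ Σ_{l=0}^{t₀} Aˡ·C_t + A^{t₀+1}·Σ_{l=0}^{t−t₀−1} Aˡ·C_{t−t₀−1}. (The two finite-time sandwich bounds established in the proof of Lemma 3.) -/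
open Matrix Filter Finset

/-!
With `g l m = (Aˡ Bᵐ)ᵢⱼ ≥ 0`, the middle sum is the sum of `g` over the triangle `l + m ≤ t`.
Split it into the rows `l ≤ t₀` and the rows `l = t₀ + 1 + k`: the lower bound keeps only part of
each row (`m ≤ t - t₀` in the first block, `m = 0` in the second), the upper bound enlarges each
row (to `m ≤ t`, resp. `m < t - t₀`).
-/

section TriangleSum

variable {M : Type*} [AddCommMonoid M]

theorem Finset.sum_range_diag_split (g : ℕ → ℕ → M) {t t₀ : ℕ} (h : t₀ ≤ t) :
    ∑ s ∈ range (t + 1), ∑ l ∈ range (s + 1), g l (s - l) =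
      ∑ l ∈ range (t₀ + 1), ∑ m ∈ range (t + 1 - l), g l m +
        ∑ k ∈ range (t - t₀), ∑ m ∈ range (t - t₀ - k), g (t₀ + 1 + k) m := by
  rw [sum_range_diag_flip, show range (t + 1) = range (t₀ + 1 + (t - t₀)) by congr 1; omega,
    sum_range_add]
  congr 1
  refine sum_congr rfl fun k _ => ?_
  rw [show t + 1 - (t₀ + 1 + k) = t - t₀ - k by omega]

variable [PartialOrder M] [AddLeftMono M]

theorem Finset.le_sum_range_diag {g : ℕ → ℕ → M} (hg : ∀ l m, 0 ≤ g l m) {t t₀ : ℕ}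
    (h : t₀ ≤ t) :
    ∑ l ∈ range (t₀ + 1), ∑ m ∈ range (t - t₀ + 1), g l m +
        ∑ k ∈ range (t - t₀), g (t₀ + 1 + k) 0 ≤
      ∑ s ∈ range (t + 1), ∑ l ∈ range (s + 1), g l (s - l) := by
  rw [sum_range_diag_split g h]
  refine add_le_add (sum_le_sum fun l hl => ?_) (sum_le_sum fun k hk => ?_)
  · exact sum_le_sum_of_subset_of_nonneg (range_mono (by have := mem_range.1 hl; omega))
      fun m _ _ => hg l m
  · exact single_le_sum (fun m _ => hg _ m) (mem_range.2 (Nat.sub_pos_of_lt (mem_range.1 hk)))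

theorem Finset.sum_range_diag_le {g : ℕ → ℕ → M} (hg : ∀ l m, 0 ≤ g l m) {t t₀ : ℕ}
    (h : t₀ ≤ t) :
    ∑ s ∈ range (t + 1), ∑ l ∈ range (s + 1), g l (s - l) ≤
      ∑ l ∈ range (t₀ + 1), ∑ m ∈ range (t + 1), g l m +
        ∑ k ∈ range (t - t₀), ∑ m ∈ range (t - t₀), g (t₀ + 1 + k) m := by
  rw [sum_range_diag_split g h]
  refine add_le_add (sum_le_sum fun l _ => ?_) (sum_le_sum fun k _ => ?_) <;>
    exact sum_le_sum_of_subset_of_nonneg (range_mono (by omega)) fun m _ _ => hg _ m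

end TriangleSum

theorem matrix_double_sum_sandwich_general
    (n : ℕ) (A B : Matrix (Fin n) (Fin n) ℝ)
    (hA : ∀ i j, 0 ≤ A i j) (hB : ∀ i j, 0 ≤ B i j)
    (C : ℕ → Matrix (Fin n) (Fin n) ℝ)
    (hC : ∀ l, C l = ∑ j ∈ Finset.range (l + 1), B ^ j)
    (t t₀ : ℕ) (ht : t₀ < t) :
    (∀ i j,
      ((∑ l ∈ Finset.range (t₀ + 1), A ^ l * C (t - t₀)) +
        A ^ (t₀ + 1) * ∑ l ∈ Finset.range (t - t₀ - 1 + 1), A ^ l) i j ≤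
      (∑ s ∈ Finset.range (t + 1), ∑ l ∈ Finset.range (s + 1),
        A ^ l * B ^ (s - l)) i j) ∧
    (∀ i j,
      (∑ s ∈ Finset.range (t + 1), ∑ l ∈ Finset.range (s + 1),
        A ^ l * B ^ (s - l)) i j ≤
      ((∑ l ∈ Finset.range (t₀ + 1), A ^ l * C t) +
        A ^ (t₀ + 1) * ∑ l ∈ Finset.range (t - t₀ - 1 + 1),
          A ^ l * C (t - t₀ - 1)) i j) := by
  have hlen : t - t₀ - 1 + 1 = t - t₀ := by omega
  have hg (i j : Fin n) (l m : ℕ) : 0 ≤ (A ^ l * B ^ m) i j := by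
    rw [Matrix.mul_apply]
    exact sum_nonneg fun k _ => mul_nonneg (pow_apply_nonneg hA l i k) (pow_apply_nonneg hB m k j)
  refine ⟨fun i j => ?_, fun i j => ?_⟩
  · refine Eq.trans_le ?_ ((le_sum_range_diag (hg i j) ht.le).trans_eq ?_)
    · simp only [hC, mul_sum, hlen, ← pow_add, Matrix.add_apply, Matrix.sum_apply, pow_zero,
        mul_one]
    · simp only [Matrix.sum_apply]
  · refine Eq.trans_le ?_ ((sum_range_diag_le (hg i j) ht.le).trans_eq ?_)
    · simp only [Matrix.sum_apply]
    · simp only [hC, mul_sum, hlen, ← mul_assoc, ← pow_add, Matrix.add_apply, Matrix.sum_apply]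

/-- The two finite-time sandwich bounds from the proof of Lemma 3, with
`C_l = Σ_{j=0}^{l} Bʲ`; all inequalities are entrywise. -/
theorem matrix_double_sum_sandwich
    (n : ℕ) (hn : 1 ≤ n) (A B : Matrix (Fin n) (Fin n) ℝ)
    (hA : ∀ i j, 0 ≤ A i j) (hB : ∀ i j, 0 ≤ B i j)
    (C : ℕ → Matrix (Fin n) (Fin n) ℝ)
    (hC : ∀ l, C l = ∑ j ∈ Finset.range (l + 1), B ^ j)
    (t t₀ : ℕ) (ht : t₀ < t) :
    (∀ i j,
      ((∑ l ∈ Finset.range (t₀ + 1), A ^ l * C (t - t₀)) +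
        A ^ (t₀ + 1) * ∑ l ∈ Finset.range (t - t₀ - 1 + 1), A ^ l) i j ≤
      (∑ s ∈ Finset.range (t + 1), ∑ l ∈ Finset.range (s + 1),
        A ^ l * B ^ (s - l)) i j) ∧
    (∀ i j,
      (∑ s ∈ Finset.range (t + 1), ∑ l ∈ Finset.range (s + 1),
        A ^ l * B ^ (s - l)) i j ≤
      ((∑ l ∈ Finset.range (t₀ + 1), A ^ l * C t) +
        A ^ (t₀ + 1) * ∑ l ∈ Finset.range (t - t₀ - 1 + 1),
          A ^ l * C (t - t₀ - 1)) i j) :=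
  matrix_double_sum_sandwich_general n A B hA hB C hC t t₀ ht
end
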